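/- arXiv:1903.06858 — 2 statements merged into one kernel-verified Lean document; each statement's English description precedes it below -/
import Mathlib

section
/- Let H be a real Hilbert space, T, A compact operators on H with w(T) ≠ 0, and suppose M_{w(T)} = D ∪ (-D) where D ⊆ S_H is connected. Then T ⊥_w A if and only if there exists a unit vector z with |⟨Tz,z⟩| = w(T) and ⟨Az,z⟩ = 0. -/
open scoped RealInnerProductSpace

/-- Numerical radius of a bounded linear operator on a real inner product space. -/
noncomputable def numRadius {E : Type*} [NormedAddCommGroup E] [InnerProductSpace ℝ E]
    (T : E →L[ℝ] E) : ℝ :=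
  sSup {r : ℝ | ∃ x : E, ‖x‖ = 1 ∧ r = |⟪T x, x⟫|}

/-- Numerical-radius orthogonality for real spaces: `T ⊥_w A`. -/
def nrOrth {E : Type*} [NormedAddCommGroup E] [InnerProductSpace ℝ E]
    (T A : E →L[ℝ] E) : Prop :=
  ∀ l : ℝ, numRadius T ≤ numRadius (T + l • A)

/-!
Suppose no unit vector `z` with `|⟪T z, z⟫| = w(T)` has `⟪A z, z⟫ = 0`. Since `D` is connected
and quadratic forms are even, `⟪T z, z⟫ ⟪A z, z⟫` has a constant sign on that set, positive after
possibly replacing `A` by `-A`. Testing `T ⊥_w A` at `λ = -δ`, `δ = 1/(n+1)`, yields unit vectors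
`xₙ` with `|⟪T xₙ, xₙ⟫ - δ ⟪A xₙ, xₙ⟫| > w(T) - δ²`; squaring gives
`2 ⟪T xₙ, xₙ⟫ ⟪A xₙ, xₙ⟫ < δ (⟪A xₙ, xₙ⟫² + 2 w(T))`. The `xₙ` maximize `|⟪T x, x⟫|`, and for
compact `T` such a sequence has a norm-convergent subsequence: along a subsequence `T xₙ` and
`⟪T xₙ, xₙ⟫` converge, and the parallelogram law bounds `w(T) ‖x - y‖²` by
`4 w(T) - |⟪T (x + y), x + y⟫|`. The limit `z` then satisfies `⟪T z, z⟫ ⟪A z, z⟫ ≤ 0`.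
-/

open Filter Topology

theorem IsPreconnected.forall_pos_or_forall_neg {X : Type*} [TopologicalSpace X] {s : Set X}
    {f : X → ℝ} (hs : IsPreconnected s) (hf : ContinuousOn f s) (h0 : ∀ x ∈ s, f x ≠ 0) :
    (∀ x ∈ s, 0 < f x) ∨ ∀ x ∈ s, f x < 0 := by
  by_contra! h
  obtain ⟨⟨a, ha, hfa⟩, ⟨b, hb, hfb⟩⟩ := h
  obtain ⟨c, hc, hfc⟩ := hs.intermediate_value ha hb hf ⟨hfa, hfb⟩
  exact h0 c hc hfc

theorem two_mul_mul_lt_of_lt_abs_sub {a b w δ : ℝ} (hδ : 0 < δ) (ha : |a| ≤ w)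
    (hw : δ ^ 2 ≤ w) (h : w - δ ^ 2 < |a - δ * b|) : 2 * (a * b) < δ * (b ^ 2 + 2 * w) := by
  have hsq : (w - δ ^ 2) ^ 2 < (a - δ * b) ^ 2 := by
    rw [← sq_abs (a - δ * b)]
    exact pow_lt_pow_left₀ h (sub_nonneg.mpr hw) two_ne_zero
  have ha2 : a ^ 2 ≤ w ^ 2 := by
    rw [← sq_abs a]
    exact pow_le_pow_left₀ (abs_nonneg a) ha 2
  nlinarith

section NumRadius

variable {H : Type*} [NormedAddCommGroup H] [InnerProductSpace ℝ H]

theorem abs_inner_apply_self_le_opNorm (B : H →L[ℝ] H) {x : H} (hx : ‖x‖ = 1) :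
    |⟪B x, x⟫| ≤ ‖B‖ :=
  calc |⟪B x, x⟫| ≤ ‖B x‖ * ‖x‖ := abs_real_inner_le_norm _ _
    _ ≤ ‖B‖ * ‖x‖ * ‖x‖ := by gcongr; exact B.le_opNorm x
    _ = ‖B‖ := by rw [hx, mul_one, mul_one]

theorem bddAbove_numRadius_set (B : H →L[ℝ] H) :
    BddAbove {r : ℝ | ∃ x : H, ‖x‖ = 1 ∧ r = |⟪B x, x⟫|} := by
  refine ⟨‖B‖, ?_⟩
  rintro r ⟨x, hx, rfl⟩
  exact abs_inner_apply_self_le_opNorm B hx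

theorem numRadius_nonneg (B : H →L[ℝ] H) : 0 ≤ numRadius B :=
  Real.sSup_nonneg <| by rintro r ⟨x, -, rfl⟩; exact abs_nonneg _

theorem abs_inner_le_numRadius (B : H →L[ℝ] H) {x : H} (hx : ‖x‖ = 1) :
    |⟪B x, x⟫| ≤ numRadius B :=
  le_csSup (bddAbove_numRadius_set B) ⟨x, hx, rfl⟩

theorem abs_inner_le_numRadius_mul_sq (B : H →L[ℝ] H) (x : H) :
    |⟪B x, x⟫| ≤ numRadius B * ‖x‖ ^ 2 := by
  rcases eq_or_ne x 0 with rfl | hx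
  · simp
  have hn : ‖x‖ ≠ 0 := norm_ne_zero_iff.mpr hx
  have h := abs_inner_le_numRadius B (x := ‖x‖⁻¹ • x)
    (by rw [norm_smul, norm_inv, norm_norm, inv_mul_cancel₀ hn])
  rw [map_smul, real_inner_smul_left, real_inner_smul_right, abs_mul, abs_mul, abs_inv,
    abs_norm, ← mul_assoc, ← mul_inv, ← sq] at h
  rwa [inv_mul_le_iff₀ (by positivity), mul_comm] at h

theorem exists_lt_abs_inner_of_lt_numRadius [Nontrivial H] (B : H →L[ℝ] H) {r : ℝ}
    (hr : r < numRadius B) : ∃ x : H, ‖x‖ = 1 ∧ r < |⟪B x, x⟫| := by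
  obtain ⟨x, hx⟩ := exists_norm_eq H zero_le_one
  obtain ⟨_, ⟨y, hy, rfl⟩, hlt⟩ := exists_lt_of_lt_csSup (by exact ⟨_, x, hx, rfl⟩) hr
  exact ⟨y, hy, hlt⟩

theorem nontrivial_of_numRadius_ne_zero {B : H →L[ℝ] H} (hB : numRadius B ≠ 0) :
    Nontrivial H := by
  by_contra h
  rw [not_nontrivial_iff_subsingleton] at h
  refine hB (le_antisymm ?_ (numRadius_nonneg B))
  refine Real.sSup_nonpos ?_
  rintro r ⟨x, hx, rfl⟩
  simp [Subsingleton.elim x 0] at hx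

theorem inner_add_smul_apply_self (T A : H →L[ℝ] H) (c : ℝ) (x : H) :
    ⟪(T + c • A) x, x⟫ = ⟪T x, x⟫ + c * ⟪A x, x⟫ := by
  simp [inner_add_left, real_inner_smul_left]

theorem continuous_inner_apply_self (B : H →L[ℝ] H) : Continuous fun x ↦ ⟪B x, x⟫ :=
  B.continuous.inner continuous_id

theorem numRadius_mul_norm_sub_sq_le (T : H →L[ℝ] H) {x y : H} (hx : ‖x‖ = 1) (hy : ‖y‖ = 1) :
    numRadius T * ‖x - y‖ ^ 2 ≤
      4 * numRadius T - |2 * ⟪T x, x⟫ + 2 * ⟪T y, y⟫| + 2 * ‖T x - T y‖ := by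
  have hpar : ‖x + y‖ ^ 2 + ‖x - y‖ ^ 2 = 4 := by
    rw [norm_add_sq_real, norm_sub_sq_real, hx, hy]; ring
  have hsum : ⟪T (x + y), x + y⟫ = 2 * ⟪T x, x⟫ + 2 * ⟪T y, y⟫ - ⟪T x - T y, x - y⟫ := by
    simp only [map_add, inner_add_left, inner_add_right, inner_sub_left, inner_sub_right]
    ring
  have hcross : |⟪T x - T y, x - y⟫| ≤ 2 * ‖T x - T y‖ := by
    have hxy : ‖x - y‖ ≤ 2 := (norm_sub_le x y).trans (by rw [hx, hy]; norm_num)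
    calc |⟪T x - T y, x - y⟫| ≤ ‖T x - T y‖ * ‖x - y‖ := abs_real_inner_le_norm _ _
      _ ≤ ‖T x - T y‖ * 2 := by gcongr
      _ = 2 * ‖T x - T y‖ := mul_comm _ _
  have hquad := abs_inner_le_numRadius_mul_sq T (x + y)
  have htri := abs_sub_abs_le_abs_sub (2 * ⟪T x, x⟫ + 2 * ⟪T y, y⟫) ⟪T x - T y, x - y⟫
  rw [← hsum] at htri
  linear_combination (numRadius T) * hpar + hquad + htri + hcross

theorem cauchySeq_of_tendsto_inner_apply_self {T : H →L[ℝ] H} (hw : numRadius T ≠ 0)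
    {x : ℕ → H} (hx : ∀ n, ‖x n‖ = 1) (hTx : CauchySeq fun n ↦ T (x n)) {t : ℝ}
    (ht : Tendsto (fun n ↦ ⟪T (x n), x n⟫) atTop (𝓝 t)) (htw : |t| = numRadius T) :
    CauchySeq x := by
  have hwpos : 0 < numRadius T := (numRadius_nonneg T).lt_of_ne' hw
  rw [cauchySeq_iff_tendsto_dist_atTop_0] at hTx ⊢
  have hfst : Tendsto (fun p : ℕ × ℕ ↦ ⟪T (x p.1), x p.1⟫) atTop (𝓝 t) :=
    ht.comp (tendsto_fst.mono_left prod_atTop_atTop_eq.ge)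
  have hsnd : Tendsto (fun p : ℕ × ℕ ↦ ⟪T (x p.2), x p.2⟫) atTop (𝓝 t) :=
    ht.comp (tendsto_snd.mono_left prod_atTop_atTop_eq.ge)
  have hbound : Tendsto (fun p : ℕ × ℕ ↦ (4 * numRadius T -
      |2 * ⟪T (x p.1), x p.1⟫ + 2 * ⟪T (x p.2), x p.2⟫| + 2 * dist (T (x p.1)) (T (x p.2))) /
        numRadius T) atTop (𝓝 0) := by
    have := ((((hfst.const_mul 2).add (hsnd.const_mul 2)).abs.const_sub
      (4 * numRadius T)).add (hTx.const_mul 2)).div_const (numRadius T)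
    convert this using 2
    rw [← two_mul, ← mul_assoc, abs_mul, htw]
    norm_num
  have hsq : Tendsto (fun p : ℕ × ℕ ↦ dist (x p.1) (x p.2) ^ 2) atTop (𝓝 0) := by
    refine squeeze_zero (fun _ ↦ sq_nonneg _) (fun p ↦ ?_) hbound
    rw [le_div_iff₀ hwpos, mul_comm, dist_eq_norm, dist_eq_norm]
    exact numRadius_mul_norm_sub_sq_le T (hx _) (hx _)
  simpa [Real.sqrt_sq dist_nonneg] using hsq.sqrt

theorem IsCompactOperator.exists_subseq_tendsto_of_tendsto_numRadius [CompleteSpace H]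
    {T : H →L[ℝ] H} (hT : IsCompactOperator T) (hw : numRadius T ≠ 0) {x : ℕ → H}
    (hx : ∀ n, ‖x n‖ = 1)
    (hlim : Tendsto (fun n ↦ |⟪T (x n), x n⟫|) atTop (𝓝 (numRadius T))) :
    ∃ φ : ℕ → ℕ, StrictMono φ ∧ ∃ z : H, ‖z‖ = 1 ∧ |⟪T z, z⟫| = numRadius T ∧
      Tendsto (x ∘ φ) atTop (𝓝 z) := by
  have hK : IsCompact (Set.Icc (-numRadius T) (numRadius T) ×ˢ
      closure (T '' Metric.closedBall 0 1)) :=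
    isCompact_Icc.prod (hT.isCompact_closure_image_closedBall 1)
  have hmem : ∀ n, (⟪T (x n), x n⟫, T (x n)) ∈ Set.Icc (-numRadius T) (numRadius T) ×ˢ
      closure (T '' Metric.closedBall 0 1) := fun n ↦
    ⟨abs_le.mp (abs_inner_le_numRadius T (hx n)),
      subset_closure ⟨x n, by simp [hx n], rfl⟩⟩
  obtain ⟨⟨t, u⟩, -, φ, hφ, hconv⟩ := hK.tendsto_subseq hmem
  have ht : Tendsto (fun n ↦ ⟪T (x (φ n)), x (φ n)⟫) atTop (𝓝 t) := hconv.fst_nhds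
  have htw : |t| = numRadius T := tendsto_nhds_unique ht.abs (hlim.comp hφ.tendsto_atTop)
  obtain ⟨z, hz⟩ := cauchySeq_tendsto_of_complete <|
    cauchySeq_of_tendsto_inner_apply_self hw (fun n ↦ hx (φ n)) hconv.snd_nhds.cauchySeq ht htw
  have hTz : ⟪T z, z⟫ = t :=
    tendsto_nhds_unique (((continuous_inner_apply_self T).tendsto z).comp hz) ht
  refine ⟨φ, hφ, z, ?_, hTz ▸ htw, hz⟩
  exact tendsto_nhds_unique hz.norm (by simp [hx])

theorem nrOrth_of_inner_eq_zero {T A : H →L[ℝ] H} {z : H} (hz : ‖z‖ = 1)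
    (hTz : |⟪T z, z⟫| = numRadius T) (hAz : ⟪A z, z⟫ = 0) : nrOrth T A := fun l ↦
  calc numRadius T = |⟪(T + l • A) z, z⟫| := by
        rw [inner_add_smul_apply_self, hAz, mul_zero, add_zero, hTz]
    _ ≤ numRadius (T + l • A) := abs_inner_le_numRadius _ hz

theorem nrOrth.neg_right {T A : H →L[ℝ] H} (h : nrOrth T A) : nrOrth T (-A) := fun l ↦ by
  simpa only [smul_neg, neg_smul] using h (-l)

theorem not_nrOrth_of_forall_pos [CompleteSpace H] {T A : H →L[ℝ] H} (hT : IsCompactOperator T)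
    (hw : numRadius T ≠ 0)
    (hpos : ∀ z : H, ‖z‖ = 1 → |⟪T z, z⟫| = numRadius T → 0 < ⟪T z, z⟫ * ⟪A z, z⟫) :
    ¬ nrOrth T A := by
  intro horth
  have hwpos : 0 < numRadius T := (numRadius_nonneg T).lt_of_ne' hw
  have := nontrivial_of_numRadius_ne_zero hw
  set δ : ℕ → ℝ := fun n ↦ 1 / ((n : ℝ) + 1)
  have hδpos : ∀ n, 0 < δ n := fun n ↦ by positivity
  have hδ : Tendsto δ atTop (𝓝 0) := tendsto_one_div_add_atTop_nhds_zero_nat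
  have hnear : ∀ n, ∃ x : H, ‖x‖ = 1 ∧
      numRadius T - δ n ^ 2 < |⟪T x, x⟫ - δ n * ⟪A x, x⟫| := fun n ↦ by
    obtain ⟨x, hx, hlt⟩ := exists_lt_abs_inner_of_lt_numRadius (T + (-δ n) • A)
      ((sub_lt_self _ (pow_pos (hδpos n) 2)).trans_le (horth (-δ n)))
    rw [inner_add_smul_apply_self, neg_mul, ← sub_eq_add_neg] at hlt
    exact ⟨x, hx, hlt⟩
  choose x hx hnear using hnear
  have hlim : Tendsto (fun n ↦ |⟪T (x n), x n⟫|) atTop (𝓝 (numRadius T)) := by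
    have hlow : Tendsto (fun n ↦ numRadius T - δ n ^ 2 - δ n * ‖A‖) atTop
        (𝓝 (numRadius T)) := by
      simpa using ((hδ.pow 2).const_sub (numRadius T)).sub (hδ.mul_const ‖A‖)
    refine tendsto_of_tendsto_of_tendsto_of_le_of_le hlow tendsto_const_nhds (fun n ↦ ?_)
      (fun n ↦ abs_inner_le_numRadius T (hx n))
    have hA := abs_inner_apply_self_le_opNorm A (hx n)
    have htri := abs_sub (⟪T (x n), x n⟫) (δ n * ⟪A (x n), x n⟫)
    rw [abs_mul, abs_of_pos (hδpos n)] at htri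
    nlinarith [hnear n, hδpos n]
  obtain ⟨φ, hφ, z, hz1, hzT, hz⟩ := hT.exists_subseq_tendsto_of_tendsto_numRadius hw hx hlim
  have hTz := ((continuous_inner_apply_self T).tendsto z).comp hz
  have hAz := ((continuous_inner_apply_self A).tendsto z).comp hz
  have hsmall : ∀ᶠ n in atTop, δ n ^ 2 ≤ numRadius T := by
    simpa using (hδ.pow 2).eventually (eventually_le_nhds (by simpa using hwpos))
  have hest : ∀ᶠ n in atTop, 2 * (⟪T (x (φ n)), x (φ n)⟫ * ⟪A (x (φ n)), x (φ n)⟫) ≤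
      δ (φ n) * (⟪A (x (φ n)), x (φ n)⟫ ^ 2 + 2 * numRadius T) := by
    filter_upwards [hφ.tendsto_atTop.eventually hsmall] with n hn
    exact (two_mul_mul_lt_of_lt_abs_sub (hδpos _) (abs_inner_le_numRadius T (hx _)) hn
      (hnear _)).le
  have hle : 2 * (⟪T z, z⟫ * ⟪A z, z⟫) ≤ 0 := by
    refine le_of_tendsto_of_tendsto ((hTz.mul hAz).const_mul 2) ?_ hest
    simpa using (hδ.comp hφ.tendsto_atTop).mul ((hAz.pow 2).add_const (2 * numRadius T))
  linarith [hpos z hz1 hzT]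

end NumRadius

theorem stmt10_general {H : Type*} [NormedAddCommGroup H] [InnerProductSpace ℝ H] [CompleteSpace H]
    (T A : H →L[ℝ] H) (hT : IsCompactOperator T)
    (hw : numRadius T ≠ 0) (D : Set H)
    (hconn : IsConnected D)
    (hM : {x : H | ‖x‖ = 1 ∧ |⟪T x, x⟫| = numRadius T} = D ∪ (-D)) :
    nrOrth T A ↔ ∃ z : H, ‖z‖ = 1 ∧ |⟪T z, z⟫| = numRadius T ∧ ⟪A z, z⟫ = 0 := by
  refine ⟨fun horth ↦ ?_, fun ⟨z, hz, hTz, hAz⟩ ↦ nrOrth_of_inner_eq_zero hz hTz hAz⟩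
  by_contra! hA
  have hmem : ∀ x ∈ D, ‖x‖ = 1 ∧ |⟪T x, x⟫| = numRadius T := fun x hx ↦
    (hM ▸ Or.inl hx : x ∈ {x : H | ‖x‖ = 1 ∧ |⟪T x, x⟫| = numRadius T})
  have hne : ∀ x ∈ D, ⟪T x, x⟫ * ⟪A x, x⟫ ≠ 0 := fun x hx ↦ by
    obtain ⟨hx1, hxT⟩ := hmem x hx
    refine mul_ne_zero (fun h ↦ hw ?_) (hA x hx1 hxT)
    rw [← hxT, h, abs_zero]
  have hnot : ∀ B : H →L[ℝ] H, (∀ x ∈ D, 0 < ⟪T x, x⟫ * ⟪B x, x⟫) → ¬ nrOrth T B :=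
    fun B hB ↦ not_nrOrth_of_forall_pos hT hw fun z hz1 hzT ↦ by
      rcases (hM ▸ ⟨hz1, hzT⟩ : z ∈ D ∪ -D) with hz | hz
      · exact hB z hz
      · simpa using hB (-z) hz
  rcases hconn.isPreconnected.forall_pos_or_forall_neg
    ((continuous_inner_apply_self T).mul (continuous_inner_apply_self A)).continuousOn
    hne with hpos | hneg
  · exact hnot A hpos horth
  · exact hnot (-A) (fun x hx ↦ by simpa using hneg x hx) horth.neg_right

theorem stmt10 {H : Type*} [NormedAddCommGroup H] [InnerProductSpace ℝ H] [CompleteSpace H]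
    (T A : H →L[ℝ] H) (hT : IsCompactOperator T) (hA : IsCompactOperator A)
    (hw : numRadius T ≠ 0) (D : Set H) (hD : D ⊆ Metric.sphere (0 : H) 1)
    (hconn : IsConnected D)
    (hM : {x : H | ‖x‖ = 1 ∧ |⟪T x, x⟫| = numRadius T} = D ∪ (-D)) :
    nrOrth T A ↔ ∃ z : H, ‖z‖ = 1 ∧ |⟪T z, z⟫| = numRadius T ∧ ⟪A z, z⟫ = 0 :=
  stmt10_general T A hT hw D hconn hM
end

section
/- Let H be a real Hilbert space and x, y unit vectors in H. Then the rank-one operator x⊗x is numerical-radius orthogonal to y⊗y if and only if ⟨x,y⟩ = 0. -/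
open scoped RealInnerProductSpace

/-- The rank-one operator `u ⊗ v : z ↦ ⟪z, v⟫ u` on a real inner product space. -/
noncomputable def rankOne {E : Type*} [NormedAddCommGroup E] [InnerProductSpace ℝ E]
    (u v : E) : E →L[ℝ] E :=
  (innerSL ℝ v).smulRight u

/-
Write `a = ⟪x, z⟫`, `b = ⟪y, z⟫`, `c = ⟪x, y⟫`; then `⟪(x⊗x + λ y⊗y) z, z⟫ = a² + λ b²`.
If `c = 0` the test vector `z = x` gives the value `1 = w(x⊗x)` for every `λ`.
If `c ≠ 0`, take `λ = -c²/16`. Cauchy–Schwarz applied to the components of `y` and `z`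
orthogonal to `x` gives `(b - c a)² ≤ 1 - a²`: whenever `a²` is close to `1`, `b²` is at least
about `c²`, so `|a² - c² b² / 16| ≤ 1 - c⁴/64` uniformly in `z`, and `w(x⊗x - (c²/16) y⊗y) < 1`.
-/

lemma abs_sq_sub_div_sixteen_mul_sq_le {a b c : ℝ} (hb : b ^ 2 ≤ 1) (hc : c ^ 2 ≤ 1)
    (h : (b - c * a) ^ 2 ≤ 1 - a ^ 2) :
    |a ^ 2 - c ^ 2 / 16 * b ^ 2| ≤ 1 - c ^ 4 / 64 := by
  have hc2 := sq_nonneg c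
  rw [abs_le]
  constructor
  · nlinarith [sq_nonneg a, mul_nonneg hc2 (sq_nonneg b)]
  · rcases le_or_gt (a ^ 2) (1 - c ^ 2 / 16) with ha | ha
    · nlinarith [mul_nonneg hc2 (sq_nonneg b)]
    · -- then `c² a² ≥ 15 c² / 16` while `(b - c a)² < c² / 16`, which forces `b² ≥ c² / 4`
      have hca : c ^ 2 * a ^ 2 ≤ 2 * b ^ 2 + 2 * (b - c * a) ^ 2 := by
        nlinarith [sq_nonneg (b + (b - c * a))]
      have hb' : c ^ 2 / 4 ≤ b ^ 2 := by nlinarith [mul_le_mul_of_nonneg_left ha.le hc2]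
      nlinarith [mul_le_mul_of_nonneg_left hb' hc2]

section

variable {E : Type*} [NormedAddCommGroup E] [InnerProductSpace ℝ E]

lemma abs_inner_apply_self_le_opNorm_s12 (T : E →L[ℝ] E) {z : E} (hz : ‖z‖ = 1) :
    |⟪T z, z⟫| ≤ ‖T‖ :=
  calc |⟪T z, z⟫| ≤ ‖T z‖ * ‖z‖ := abs_real_inner_le_norm _ _
    _ ≤ ‖T‖ * ‖z‖ * ‖z‖ := by gcongr; exact T.le_opNorm z
    _ = ‖T‖ := by rw [hz, mul_one, mul_one]

lemma abs_inner_apply_self_le_numRadius (T : E →L[ℝ] E) {z : E} (hz : ‖z‖ = 1) :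
    |⟪T z, z⟫| ≤ numRadius T := by
  refine le_csSup ⟨‖T‖, ?_⟩ ⟨z, hz, rfl⟩
  rintro _ ⟨w, hw, rfl⟩
  exact abs_inner_apply_self_le_opNorm_s12 T hw

lemma numRadius_le {T : E →L[ℝ] E} {C : ℝ} (hC : 0 ≤ C)
    (h : ∀ z : E, ‖z‖ = 1 → |⟪T z, z⟫| ≤ C) : numRadius T ≤ C :=
  Real.sSup_le (by rintro _ ⟨z, hz, rfl⟩; exact h z hz) hC

lemma real_inner_sq_le_one {u v : E} (hu : ‖u‖ = 1) (hv : ‖v‖ = 1) : ⟪u, v⟫ ^ 2 ≤ 1 := by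
  rw [sq_le_one_iff_abs_le_one]
  simpa [hu, hv] using abs_real_inner_le_norm u v

lemma inner_sub_inner_mul_inner_sq_le {x : E} (hx : ‖x‖ = 1) (y z : E) :
    (⟪y, z⟫ - ⟪x, y⟫ * ⟪x, z⟫) ^ 2 ≤ (‖y‖ ^ 2 - ⟪x, y⟫ ^ 2) * (‖z‖ ^ 2 - ⟪x, z⟫ ^ 2) := by
  have h := real_inner_mul_inner_self_le (y - ⟪x, y⟫ • x) (z - ⟪x, z⟫ • x)
  have hxx : ⟪x, x⟫ = 1 := by rw [real_inner_self_eq_norm_sq, hx, one_pow]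
  simp only [inner_sub_left, inner_sub_right, real_inner_smul_left, real_inner_smul_right, hxx,
    real_inner_self_eq_norm_sq y, real_inner_self_eq_norm_sq z, real_inner_comm x] at h
  nlinarith [h]

lemma inner_rankOne_self_apply_self (u z : E) : ⟪rankOne u u z, z⟫ = ⟪u, z⟫ ^ 2 := by
  simp [rankOne, real_inner_smul_left, sq]

lemma inner_rankOne_add_smul_rankOne_apply_self (x y z : E) (l : ℝ) :
    ⟪(rankOne x x + l • rankOne y y) z, z⟫ = ⟪x, z⟫ ^ 2 + l * ⟪y, z⟫ ^ 2 := by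
  simp only [add_apply, smul_apply, inner_add_left,
    real_inner_smul_left, inner_rankOne_self_apply_self]

lemma numRadius_rankOne_self {x : E} (hx : ‖x‖ = 1) : numRadius (rankOne x x) = 1 := by
  refine le_antisymm (numRadius_le zero_le_one fun z hz => ?_) ?_
  · rw [inner_rankOne_self_apply_self, abs_of_nonneg (sq_nonneg _)]
    exact real_inner_sq_le_one hx hz
  · simpa [inner_rankOne_self_apply_self, real_inner_self_eq_norm_sq, hx]
      using abs_inner_apply_self_le_numRadius (rankOne x x) hx

lemma numRadius_rankOne_sub_smul_rankOne_lt_one {x y : E} (hx : ‖x‖ = 1) (hy : ‖y‖ = 1) (hxy : ⟪x, y⟫ ≠ 0) :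
    numRadius (rankOne x x + (-(⟪x, y⟫ ^ 2 / 16)) • rankOne y y) < 1 := by
  have hc : ⟪x, y⟫ ^ 2 ≤ 1 := real_inner_sq_le_one hx hy
  have hbound : 0 ≤ 1 - ⟪x, y⟫ ^ 4 / 64 := by nlinarith
  have hlt : 1 - ⟪x, y⟫ ^ 4 / 64 < 1 := by
    have := pow_pos (sq_pos_of_ne_zero hxy) 2
    linarith
  refine lt_of_le_of_lt (numRadius_le hbound fun z hz => ?_) hlt
  have hproj : (⟪y, z⟫ - ⟪x, y⟫ * ⟪x, z⟫) ^ 2 ≤ 1 - ⟪x, z⟫ ^ 2 := by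
    have := inner_sub_inner_mul_inner_sq_le hx y z
    rw [hy, hz] at this
    nlinarith [mul_nonneg (sq_nonneg ⟪x, y⟫) (sub_nonneg.2 (real_inner_sq_le_one hx hz))]
  rw [inner_rankOne_add_smul_rankOne_apply_self, neg_mul, ← sub_eq_add_neg]
  exact abs_sq_sub_div_sixteen_mul_sq_le (real_inner_sq_le_one hy hz) hc hproj

end

theorem stmt12_general {H : Type*} [NormedAddCommGroup H] [InnerProductSpace ℝ H]
    (x y : H) (hx : ‖x‖ = 1) (hy : ‖y‖ = 1) :
    nrOrth (rankOne x x) (rankOne y y) ↔ ⟪x, y⟫ = 0 := by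
  rw [nrOrth, numRadius_rankOne_self hx]
  constructor
  · intro horth
    by_contra hxy
    exact (horth _).not_gt (numRadius_rankOne_sub_smul_rankOne_lt_one hx hy hxy)
  · intro hxy l
    have hx_val := abs_inner_apply_self_le_numRadius (rankOne x x + l • rankOne y y) hx
    rw [inner_rankOne_add_smul_rankOne_apply_self, real_inner_self_eq_norm_sq, hx,
      real_inner_comm, hxy] at hx_val
    simpa using hx_val

theorem stmt12 {H : Type*} [NormedAddCommGroup H] [InnerProductSpace ℝ H] [CompleteSpace H]
    (x y : H) (hx : ‖x‖ = 1) (hy : ‖y‖ = 1) :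
    nrOrth (rankOne x x) (rankOne y y) ↔ ⟪x, y⟫ = 0 :=
  stmt12_general x y hx hy
end
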